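/- arXiv:1712.05825 — 9 statements merged into one kernel-verified Lean document; each statement's English description precedes it below -/
import Mathlib

section
/- Let C = {S_1,…,S_k} with k ≥ 2 be a partition of the vertices of graph G minimizing the standard LambdaCC objective with parameter λ ∈ (0,1). Then every cluster S_i satisfies scaled sparsest cut cut(S_i, V∖S_i)/(|S_i||V∖S_i|) ≤ λ. -/
/-!
Merging two clusters `S_i`, `S_j` changes the LambdaCC objective by `λ|S_i||S_j| - cut(S_i, S_j)`:
the edges between them stop paying `1 - λ` and the non-adjacent pairs between them start paying
`λ`. At an optimum this change is nonnegative, and summing over the clusters `S_j ≠ S_i` gives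
`cut(S_i, V∖S_i) ≤ λ|S_i||V∖S_i|`.
-/

open Finset

/-- The number of edges of `G` between `S` and its complement. -/
def cutval {V : Type*} [Fintype V] [DecidableEq V]
    (G : SimpleGraph V) [DecidableRel G.Adj] (S : Finset V) : ℕ :=
  ((S ×ˢ Sᶜ).filter fun p => G.Adj p.1 p.2).card

/-- The standard LambdaCC objective of the clustering given by `c` (two nodes are
co-clustered iff they have the same `c`-value): each cut edge costs `1 - λ` and each
co-clustered non-adjacent pair costs `λ`.  Each unordered pair is counted once
via `1/2 · offDiag`. -/
noncomputable def lamCC {V : Type*} [Fintype V] [DecidableEq V]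
    (G : SimpleGraph V) [DecidableRel G.Adj] (lam : ℝ) (c : V → ℕ) : ℝ :=
  (1 / 2) * ∑ p ∈ Finset.univ.offDiag,
    (if G.Adj p.1 p.2 then (if c p.1 = c p.2 then 0 else 1 - lam)
     else (if c p.1 = c p.2 then lam else 0))

namespace LambdaCC

variable {V : Type*} (G : SimpleGraph V) [DecidableRel G.Adj]

def edgesBetween (A B : Finset V) : Finset (V × V) := (A ×ˢ B).filter fun p => G.Adj p.1 p.2

lemma card_edgesBetween_comm (A B : Finset V) :
    #(edgesBetween G A B) = #(edgesBetween G B A) :=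
  card_nbij' Prod.swap Prod.swap
    (fun p hp => by simp_all [edgesBetween, G.adj_comm])
    (fun p hp => by simp_all [edgesBetween, G.adj_comm])
    (fun _ _ => rfl) (fun _ _ => rfl)

lemma card_edgesBetween_eq_sum_fiberwise {ι : Type*} [DecidableEq ι] (f : V → ι)
    (A T : Finset V) :
    #(edgesBetween G A T) = ∑ j ∈ T.image f, #(edgesBetween G A (T.filter (f · = j))) := by
  rw [card_eq_sum_card_fiberwise (f := fun p : V × V => f p.2) fun p hp => by
    simp only [edgesBetween, coe_filter, Set.mem_ofPred_eq, mem_product] at hp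
    exact mem_coe.2 (mem_image_of_mem f hp.1.2)]
  refine sum_congr rfl fun j _ => ?_
  rw [edgesBetween, edgesBetween, filter_comm, ← filter_product_right]

-- `λ - 1` resp. `λ` is what a pair between two clusters adds to the objective when they merge.
lemma sum_product_ite_adj (lam : ℝ) (A B : Finset V) :
    ∑ p ∈ A ×ˢ B, (if G.Adj p.1 p.2 then lam - 1 else lam) =
      lam * (#A * #B) - #(edgesBetween G A B) := by
  have h : ∀ p : V × V, (if G.Adj p.1 p.2 then lam - 1 else lam) =
      lam - if G.Adj p.1 p.2 then 1 else 0 := fun p => by split_ifs <;> ring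
  simp only [h, sum_sub_distrib, sum_const, card_product, sum_boole, nsmul_eq_mul, edgesBetween]
  push_cast
  ring

variable [Fintype V] [DecidableEq V]

lemma cutval_eq_card_edgesBetween (S : Finset V) : cutval G S = #(edgesBetween G S Sᶜ) := rfl

def cluster (c : V → ℕ) (k : ℕ) : Finset V := univ.filter (c · = k)

def merge (c : V → ℕ) (k j : ℕ) : V → ℕ := fun v => if c v = k then j else c v

lemma lamCC_merge_sub_lamCC (lam : ℝ) (c : V → ℕ) {k j : ℕ} (hjk : j ≠ k) :
    lamCC G lam (merge c k j) - lamCC G lam c =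
      lam * (#(cluster c k) * #(cluster c j)) - #(edgesBetween G (cluster c k) (cluster c j)) := by
  set T := cluster c k ×ˢ cluster c j ∪ cluster c j ×ˢ cluster c k
  have hT : univ.offDiag ∩ T = T := inter_eq_right.2 fun p hp => by
    simp only [T, cluster, mem_union, mem_product, mem_filter, mem_univ, true_and] at hp
    simp only [mem_offDiag, mem_univ, true_and, ne_eq]
    intro h
    rw [h] at hp
    omega
  have hdisj : Disjoint (cluster c k ×ˢ cluster c j) (cluster c j ×ˢ cluster c k) :=
    disjoint_product.2 <| Or.inl <| disjoint_filter.2 fun v _ hk hj => hjk (hj ▸ hk)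
  have hsum : lam * (#(cluster c k) * #(cluster c j)) -
      #(edgesBetween G (cluster c k) (cluster c j)) =
      1 / 2 * ∑ p ∈ univ.offDiag ∩ T, (if G.Adj p.1 p.2 then lam - 1 else lam) := by
    rw [hT, sum_union hdisj, sum_product_ite_adj, sum_product_ite_adj,
      card_edgesBetween_comm G (cluster c j)]
    ring
  rw [lamCC, lamCC, ← mul_sub, ← sum_sub_distrib, hsum, ← sum_ite_mem]
  congr 1
  refine sum_congr rfl fun p _ => ?_
  simp only [T, merge, cluster, mem_union, mem_product, mem_filter, mem_univ, true_and]
  split_ifs <;> first | ring1 | (exfalso; omega)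


lemma card_edgesBetween_clusters_le (lam : ℝ) (c : V → ℕ)
    (hopt : ∀ c' : V → ℕ, lamCC G lam c ≤ lamCC G lam c') {k j : ℕ} (hjk : j ≠ k) :
    (#(edgesBetween G (cluster c k) (cluster c j)) : ℝ) ≤
      lam * (#(cluster c k) * #(cluster c j)) := by
  have := lamCC_merge_sub_lamCC G lam c hjk
  linarith [hopt (merge c k j)]

lemma cutval_cluster_le (lam : ℝ) (c : V → ℕ)
    (hopt : ∀ c' : V → ℕ, lamCC G lam c ≤ lamCC G lam c') (k : ℕ) :
    (cutval G (cluster c k) : ℝ) ≤ lam * (#(cluster c k) * #(cluster c k)ᶜ) := by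
  set S := cluster c k
  have hfiber : ∀ j ∈ Sᶜ.image c, Sᶜ.filter (c · = j) = cluster c j ∧ j ≠ k := by
    intro j hj
    obtain ⟨v, hv, rfl⟩ := mem_image.1 hj
    simp only [S, cluster, mem_compl, mem_filter, mem_univ, true_and] at hv
    refine ⟨?_, hv⟩
    ext w
    simp only [S, cluster, mem_compl, mem_filter, mem_univ, true_and]
    exact ⟨And.right, fun hw => ⟨hw ▸ hv, hw⟩⟩
  calc (cutval G S : ℝ)
      = ∑ j ∈ Sᶜ.image c, (#(edgesBetween G S (Sᶜ.filter (c · = j))) : ℝ) := by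
        rw [cutval_eq_card_edgesBetween, card_edgesBetween_eq_sum_fiberwise G c, Nat.cast_sum]
    _ ≤ ∑ j ∈ Sᶜ.image c, lam * (#S * #(Sᶜ.filter (c · = j))) := sum_le_sum fun j hj => by
        rw [(hfiber j hj).1]
        exact card_edgesBetween_clusters_le G lam c hopt (hfiber j hj).2
    _ = lam * (#S * #Sᶜ) := by
        rw [← mul_sum, ← mul_sum, card_eq_sum_card_image c Sᶜ, Nat.cast_sum]

end LambdaCC

theorem optimal_lamCC_cluster_sparsestCut_le_general {V : Type*} [Fintype V] [DecidableEq V]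
    (G : SimpleGraph V) [DecidableRel G.Adj] (lam : ℝ) (hlam0 : 0 < lam)
    (c : V → ℕ) (hopt : ∀ c' : V → ℕ, lamCC G lam c ≤ lamCC G lam c') :
    ∀ k ∈ Finset.univ.image c,
      (cutval G (Finset.univ.filter fun v => c v = k) : ℝ)
          / (((Finset.univ.filter fun v => c v = k).card : ℝ)
              * ((Finset.univ.filter fun v => c v = k)ᶜ.card : ℝ)) ≤ lam := fun k _ =>
  div_le_of_le_mul₀ (by positivity) hlam0.le (LambdaCC.cutval_cluster_le G lam c hopt k)

/-- If `c` minimizes the standard LambdaCC objective and produces at least two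
clusters, then every cluster `S_i` has scaled sparsest cut
`cut(S_i)/(|S_i||V∖S_i|) ≤ λ`. -/
theorem optimal_lamCC_cluster_sparsestCut_le {V : Type*} [Fintype V] [DecidableEq V]
    (G : SimpleGraph V) [DecidableRel G.Adj] (lam : ℝ) (hlam0 : 0 < lam) (hlam1 : lam < 1)
    (c : V → ℕ) (hopt : ∀ c' : V → ℕ, lamCC G lam c ≤ lamCC G lam c')
    (hk : 2 ≤ (Finset.univ.image c).card) :
    ∀ k ∈ Finset.univ.image c,
      (cutval G (Finset.univ.filter fun v => c v = k) : ℝ)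
          / (((Finset.univ.filter fun v => c v = k).card : ℝ)
              * ((Finset.univ.filter fun v => c v = k)ᶜ.card : ℝ)) ≤ lam :=
  optimal_lamCC_cluster_sparsestCut_le_general G lam hlam0 c hopt
end

section
/- Let G = (V,E) be a graph and λ* = min over nontrivial S ⊆ V of cut(S)/(|S||V∖S|) be the minimum scaled sparsest cut. If λ ≤ λ*, then the single cluster {V} is an optimal solution to the standard LambdaCC objective with parameter λ. -/
open Finset

lemma lamCC_inner_sum {V : Type*} [Fintype V] [DecidableEq V]
    (G : SimpleGraph V) [DecidableRel G.Adj] (lam : ℝ) (S : Finset V) :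
    ∑ p ∈ S ×ˢ Sᶜ, ((if G.Adj p.1 p.2 then (1:ℝ) else 0) - lam)
      = (cutval G S : ℝ) - lam * ((S.card : ℝ) * (Sᶜ.card : ℝ)) := by
  rw [Finset.sum_sub_distrib, Finset.sum_boole, Finset.sum_const, Finset.card_product]
  simp [cutval, mul_comm]

/-- If `λ` is at most the minimum scaled sparsest cut of `G`, then the single
cluster containing all of `V` is an optimal solution for standard LambdaCC. -/
theorem single_cluster_optimal_of_lam_le {V : Type*} [Fintype V] [DecidableEq V]
    (G : SimpleGraph V) [DecidableRel G.Adj] (lam : ℝ) (hlam0 : 0 < lam) (hlam1 : lam < 1)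
    (hmin : ∀ S : Finset V, S.Nonempty → S ≠ Finset.univ →
      lam ≤ (cutval G S : ℝ) / ((S.card : ℝ) * (Sᶜ.card : ℝ))) :
    ∀ c' : V → ℕ, lamCC G lam (fun _ => 0) ≤ lamCC G lam c' := by
  intro c'
  rw [lamCC, lamCC, ← sub_nonneg, ← mul_sub, ← Finset.sum_sub_distrib]
  apply mul_nonneg (by norm_num)
  -- the difference term
  have hsum :
      ∑ p ∈ (Finset.univ : Finset V).offDiag,
        ((if G.Adj p.1 p.2 then (if c' p.1 = c' p.2 then (0:ℝ) else 1 - lam)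
          else (if c' p.1 = c' p.2 then lam else 0))
         - (if G.Adj p.1 p.2 then (if (fun _ => (0:ℕ)) p.1 = (fun _ => (0:ℕ)) p.2 then (0:ℝ) else 1 - lam)
            else (if (fun _ => (0:ℕ)) p.1 = (fun _ => (0:ℕ)) p.2 then lam else 0)))
      = ∑ p ∈ (Finset.univ : Finset V).offDiag.filter (fun p => c' p.1 ≠ c' p.2),
          ((if G.Adj p.1 p.2 then (1:ℝ) else 0) - lam) := by
    rw [Finset.sum_filter]
    refine Finset.sum_congr rfl fun p _ => ?_
    by_cases h : c' p.1 = c' p.2 <;> by_cases ha : G.Adj p.1 p.2 <;> simp [h, ha]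
  rw [hsum]
  -- decompose over clusters
  have hset : (Finset.univ : Finset V).offDiag.filter (fun p => c' p.1 ≠ c' p.2)
      = (Finset.univ.image c').biUnion
          (fun n => (Finset.univ.filter (fun v => c' v = n)) ×ˢ
                    (Finset.univ.filter (fun v => c' v = n))ᶜ) := by
    ext p
    simp only [Finset.mem_filter, Finset.mem_offDiag, Finset.mem_biUnion, Finset.mem_image,
      Finset.mem_product, Finset.mem_compl, Finset.mem_univ, true_and]
    constructor
    · rintro ⟨-, hne⟩
      exact ⟨c' p.1, ⟨p.1, rfl⟩, rfl, fun h => hne h.symm⟩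
    · rintro ⟨n, -, h1, h2⟩
      have hne : c' p.1 ≠ c' p.2 := by rw [h1]; exact fun h => h2 h.symm
      exact ⟨fun h => hne (by rw [h]), hne⟩
  rw [hset, Finset.sum_biUnion]
  · apply Finset.sum_nonneg
    intro n hn
    rw [lamCC_inner_sum]
    set S := Finset.univ.filter (fun v => c' v = n) with hS
    rw [sub_nonneg]
    by_cases hu : S = Finset.univ
    · have : (Sᶜ.card : ℝ) = 0 := by rw [hu]; simp
      rw [this, mul_zero, mul_zero]
      positivity
    · have hne : S.Nonempty := by
        obtain ⟨v, -, rfl⟩ := Finset.mem_image.mp hn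
        exact ⟨v, by simp [hS]⟩
      have h1 : (0:ℝ) < S.card := by exact_mod_cast Finset.card_pos.mpr hne
      have h2 : (0:ℝ) < Sᶜ.card := by
        have : Sᶜ.Nonempty := by
          rw [← Finset.card_pos, Finset.card_compl]
          have := (Finset.card_lt_iff_ne_univ S).mpr hu
          omega
        exact_mod_cast Finset.card_pos.mpr this
      have := hmin S hne hu
      calc lam * ((S.card : ℝ) * Sᶜ.card)
          ≤ ((cutval G S : ℝ) / ((S.card : ℝ) * Sᶜ.card)) * ((S.card : ℝ) * Sᶜ.card) := by
            apply mul_le_mul_of_nonneg_right this (by positivity)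
        _ = (cutval G S : ℝ) := by field_simp
  · intro a ha b hb hab
    simp only [Finset.disjoint_left, Finset.mem_product, Finset.mem_filter, Finset.mem_univ,
      true_and]
    rintro p ⟨h1, -⟩ ⟨h2, -⟩
    exact hab (h1.symm.trans h2)
end

section
/- Let G = (V,E) be a graph with minimum scaled sparsest cut λ*. For every λ > λ*, any partition minimizing the standard LambdaCC objective with parameter λ has at least two clusters, and every cluster S in it satisfies cut(S)/(|S||V∖S|) ≤ λ. -/
/-!
Merging two clusters `A`, `B` of a clustering changes the LambdaCC objective by
`λ|A||B| - e(A, B)`.  At an optimum this is nonnegative, so at most `λ|A||B|` edges join any two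
clusters; summing over the clusters other than `S` gives `cut(S) ≤ λ|S||V∖S|`.  Read backwards,
splitting the single cluster `V` along a cut `S*` of sparsity `λ* < λ` lowers the objective by
`λ|S*||V∖S*| - cut(S*) > 0`, so an optimal clustering has at least two clusters.
-/

open Finset

section LambdaCC

variable {V : Type*} [Fintype V] [DecidableEq V] (G : SimpleGraph V) [DecidableRel G.Adj]

lemma cutval_eq_card_interedges (S : Finset V) : cutval G S = #(G.interedges S Sᶜ) := rfl

omit [Fintype V] [DecidableEq V] in
lemma sum_product_sub_ite_adj (lam : ℝ) (A B : Finset V) :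
    ∑ p ∈ A ×ˢ B, (lam - if G.Adj p.1 p.2 then 1 else 0) = lam * #A * #B - #(G.interedges A B) := by
  rw [sum_sub_distrib, sum_const, card_product, sum_boole, nsmul_eq_mul,
    SimpleGraph.interedges_def]
  push_cast
  ring

omit [Fintype V] in
lemma card_interedges_biUnion_le {ι : Type*} {lam : ℝ} (s : Finset V) (t : Finset ι)
    (f : ι → Finset V) (hf : (t : Set ι).PairwiseDisjoint f)
    (h : ∀ i ∈ t, (#(G.interedges s (f i)) : ℝ) ≤ lam * #s * #(f i)) :
    (#(G.interedges s (t.biUnion f)) : ℝ) ≤ lam * #s * #(t.biUnion f) := by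
  have hf' : (t : Set ι).PairwiseDisjoint fun i => G.interedges s (f i) :=
    fun i hi j hj hij => G.interedges_disjoint_right s (hf hi hj hij)
  rw [SimpleGraph.interedges_biUnion_right, card_biUnion hf', card_biUnion hf]
  push_cast
  rw [mul_sum]
  exact sum_le_sum h

-- Only the second sum depends on the clustering.
lemma lamCC_eq (lam : ℝ) (c : V → ℕ) :
    lamCC G lam c = (1 / 2) * ∑ p ∈ univ.offDiag, (if G.Adj p.1 p.2 then 1 - lam else 0)
      + (1 / 2) * ∑ p ∈ univ.offDiag,
          (if c p.1 = c p.2 then lam - (if G.Adj p.1 p.2 then 1 else 0) else 0) := by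
  rw [lamCC, ← mul_add, ← sum_add_distrib]
  congr 1
  refine sum_congr rfl fun p _ => ?_
  split_ifs <;> ring

lemma lamCC_sub_lamCC_of_join (lam : ℝ) (c c' : V → ℕ) (A B : Finset V)
    (hsep : ∀ u ∈ A, ∀ v ∈ B, c u ≠ c v)
    (hjoin : ∀ u v, u ≠ v → (c' u = c' v ↔ c u = c v ∨ (u ∈ A ∧ v ∈ B) ∨ (u ∈ B ∧ v ∈ A))) :
    lamCC G lam c' - lamCC G lam c = lam * #A * #B - #(G.interedges A B) := by
  set AB := A ×ˢ B ∪ B ×ˢ A with hAB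
  have hdisj : Disjoint (A ×ˢ B) (B ×ˢ A) := by
    rw [disjoint_left]
    rintro ⟨u, v⟩ huv hvu
    simp only [mem_product] at huv hvu
    exact hsep u huv.1 u hvu.1 rfl
  have hsub : AB ⊆ univ.offDiag := by
    rintro ⟨u, v⟩ h
    simp only [hAB, mem_union, mem_product] at h
    simp only [mem_offDiag, mem_univ, true_and]
    rintro rfl
    rcases h with h | h
    · exact hsep u h.1 u h.2 rfl
    · exact hsep u h.2 u h.1 rfl
  have hdiff : lamCC G lam c' - lamCC G lam c =
      (1 / 2) * ∑ p ∈ AB, (lam - if G.Adj p.1 p.2 then 1 else 0) := by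
    rw [lamCC_eq, lamCC_eq, add_sub_add_left_eq_sub, ← mul_sub, ← sum_sub_distrib,
      ← inter_eq_right.2 hsub, ← sum_ite_mem]
    congr 1
    refine sum_congr rfl fun ⟨u, v⟩ huv => ?_
    simp only [mem_offDiag, mem_univ, true_and] at huv
    have hiff : c' u = c' v ↔ c u = c v ∨ (u, v) ∈ AB := by
      simpa only [hAB, mem_union, mem_product] using hjoin u v huv
    by_cases h : (u, v) ∈ AB
    · have hsplit : c u ≠ c v := by
        simp only [hAB, mem_union, mem_product] at h
        rcases h with h | h
        · exact hsep u h.1 v h.2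
        · exact fun h' => hsep v h.2 u h.1 h'.symm
      simp [h, hsplit, hiff]
    · by_cases h' : c u = c v <;> simp [h, h', hiff]
  have hcomm : #(G.interedges B A) = #(G.interedges A B) :=
    have := G.symm
    Rel.card_interedges_comm B A
  rw [hdiff, sum_union hdisj, sum_product_sub_ite_adj, sum_product_sub_ite_adj, hcomm]
  ring

def IsLamCCMinimizer (lam : ℝ) (c : V → ℕ) : Prop :=
  ∀ c' : V → ℕ, lamCC G lam c ≤ lamCC G lam c'

variable {G}

lemma IsLamCCMinimizer.card_interedges_le {lam : ℝ} {c : V → ℕ}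
    (hopt : IsLamCCMinimizer G lam c) {k l : ℕ} (hkl : k ≠ l) :
    (#(G.interedges {v | c v = k} {v | c v = l}) : ℝ)
      ≤ lam * #({v | c v = k} : Finset V) * #({v | c v = l} : Finset V) := by
  have hdiff := lamCC_sub_lamCC_of_join G lam c (fun v => if c v = k then l else c v)
    {v | c v = k} {v | c v = l}
    (by simp only [mem_filter, mem_univ, true_and]; rintro u rfl v rfl; exact hkl)
    (by intro u v _; simp only [mem_filter, mem_univ, true_and]; split_ifs <;> omega)
  linarith [hopt fun v => if c v = k then l else c v]

lemma IsLamCCMinimizer.lam_mul_le_cutval_of_const {lam : ℝ} {c : V → ℕ}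
    (hopt : IsLamCCMinimizer G lam c) (hconst : ∀ u v, c u = c v)
    (S : Finset V) :
    lam * #S * #Sᶜ ≤ cutval G S := by
  have hdiff := lamCC_sub_lamCC_of_join G lam (fun v => if v ∈ S then 0 else 1) c S Sᶜ
    (by intro u hu v hv; rw [mem_compl] at hv; simp [hu, hv])
    (by intro u v _; simp only [hconst u v, mem_compl, true_iff]; split_ifs <;> tauto)
  rw [cutval_eq_card_interedges]
  linarith [hopt fun v => if v ∈ S then 0 else 1]

lemma IsLamCCMinimizer.cutval_le {lam : ℝ} {c : V → ℕ}
    (hopt : IsLamCCMinimizer G lam c) (k : ℕ) :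
    (cutval G {v | c v = k} : ℝ)
      ≤ lam * #({v | c v = k} : Finset V) * #({v | c v = k} : Finset V)ᶜ := by
  have hcompl : ({v | c v = k} : Finset V)ᶜ
      = ((univ.image c).erase k).biUnion fun l => {v | c v = l} := by
    ext v
    simp
  have hfibers : (((univ.image c).erase k : Finset ℕ) : Set ℕ).PairwiseDisjoint
      fun l => ({v | c v = l} : Finset V) :=
    fun l _ l' _ hll' => disjoint_filter.2 fun v _ hl hl' => hll' (hl ▸ hl')
  rw [cutval_eq_card_interedges, hcompl]
  exact card_interedges_biUnion_le G _ _ _ hfibers fun l hl =>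
    hopt.card_interedges_le (mem_erase.1 hl).1.symm

end LambdaCC

theorem optimal_lamCC_of_lam_gt_sparsestCut_general {V : Type*} [Fintype V] [DecidableEq V]
    (G : SimpleGraph V) [DecidableRel G.Adj] (lam lamstar : ℝ)
    (hstar_attained : ∃ S : Finset V, S.Nonempty ∧ S ≠ Finset.univ ∧
      (cutval G S : ℝ) / ((S.card : ℝ) * (Sᶜ.card : ℝ)) = lamstar)
    (hgt : lamstar < lam)
    (c : V → ℕ) (hopt : ∀ c' : V → ℕ, lamCC G lam c ≤ lamCC G lam c') :
    2 ≤ (Finset.univ.image c).card ∧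
      ∀ k ∈ Finset.univ.image c,
        (cutval G (Finset.univ.filter fun v => c v = k) : ℝ)
            / (((Finset.univ.filter fun v => c v = k).card : ℝ)
                * ((Finset.univ.filter fun v => c v = k)ᶜ.card : ℝ)) ≤ lam := by
  obtain ⟨S, hS, hSuniv, rfl⟩ := hstar_attained
  have hSc : Sᶜ.Nonempty := by simpa [nonempty_iff_ne_empty] using hSuniv
  have hSSc : 0 < (#S : ℝ) * #Sᶜ := by simp only [← Nat.cast_mul]; positivity
  refine ⟨?_, fun k _ => ?_⟩
  · by_contra! hcard
    have hconst (u v : V) : c u = c v :=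
      card_le_one.1 (Nat.le_of_lt_succ hcard) _ (mem_image_of_mem c (mem_univ u)) _
        (mem_image_of_mem c (mem_univ v))
    have hsplit := IsLamCCMinimizer.lam_mul_le_cutval_of_const hopt hconst S
    rw [div_lt_iff₀ hSSc] at hgt
    linarith
  · have hlam : 0 ≤ lam := hgt.le.trans' (by positivity)
    exact div_le_of_le_mul₀ (by positivity) hlam
      ((IsLamCCMinimizer.cutval_le hopt k).trans_eq (mul_assoc _ _ _))

/-- If `λ` exceeds the minimum scaled sparsest cut `λ*`, then any clustering
minimizing the standard LambdaCC objective has at least two clusters, and every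
cluster has scaled sparsest cut at most `λ`. -/
theorem optimal_lamCC_of_lam_gt_sparsestCut {V : Type*} [Fintype V] [DecidableEq V]
    (G : SimpleGraph V) [DecidableRel G.Adj] (lam lamstar : ℝ)
    (hlam0 : 0 < lam) (hlam1 : lam < 1)
    (hstar_attained : ∃ S : Finset V, S.Nonempty ∧ S ≠ Finset.univ ∧
      (cutval G S : ℝ) / ((S.card : ℝ) * (Sᶜ.card : ℝ)) = lamstar)
    (hstar_min : ∀ S : Finset V, S.Nonempty → S ≠ Finset.univ →
      lamstar ≤ (cutval G S : ℝ) / ((S.card : ℝ) * (Sᶜ.card : ℝ)))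
    (hgt : lamstar < lam)
    (c : V → ℕ) (hopt : ∀ c' : V → ℕ, lamCC G lam c ≤ lamCC G lam c') :
    2 ≤ (Finset.univ.image c).card ∧
      ∀ k ∈ Finset.univ.image c,
        (cutval G (Finset.univ.filter fun v => c v = k) : ℝ)
            / (((Finset.univ.filter fun v => c v = k).card : ℝ)
                * ((Finset.univ.filter fun v => c v = k)ᶜ.card : ℝ)) ≤ lam :=
  optimal_lamCC_of_lam_gt_sparsestCut_general G lam lamstar hstar_attained hgt c hopt
end

section
/- If a partition C minimizes the standard LambdaCC objective with parameter λ ∈ (0,1) on graph G = (V,E), then every cluster S ∈ C has edge density |E_S|/C(|S|,2) ≥ λ, where E_S is the set of edges of G with both endpoints in S (singleton clusters have density 1 by convention). -/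
open Finset

/-- Every cluster `S` of a clustering minimizing the standard LambdaCC objective has
edge density at least `λ`, i.e. `|E_S| ≥ λ·C(|S|,2)` (here `|E_S|` is half the number
of ordered adjacent pairs inside `S`). -/
theorem optimal_lamCC_cluster_density_ge {V : Type*} [Fintype V] [DecidableEq V]
    (G : SimpleGraph V) [DecidableRel G.Adj] (lam : ℝ) (hlam0 : 0 < lam) (hlam1 : lam < 1)
    (c : V → ℕ) (hopt : ∀ c' : V → ℕ, lamCC G lam c ≤ lamCC G lam c') :
    ∀ k ∈ Finset.univ.image c,
      lam * (((Finset.univ.filter fun v => c v = k).card.choose 2 : ℕ) : ℝ)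
        ≤ (((Finset.univ.filter fun v => c v = k).offDiag.filter
              fun p => G.Adj p.1 p.2).card : ℝ) / 2 := by
  intro k hk
  classical
  set S : Finset V := Finset.univ.filter fun v => c v = k with hS
  -- the clustering that splits cluster `k` into singletons
  set c' : V → ℕ := fun v => if c v = k then 2 * ((Fintype.equivFin V v : ℕ)) + 1 else 2 * c v
    with hc'
  -- separation within S
  have hsep : ∀ v w : V, c v = k → c w = k → v ≠ w → c' v ≠ c' w := by
    intro v w hv hw hvw h
    simp only [hc', hv, hw, if_true] at h
    have : (Fintype.equivFin V v : ℕ) = (Fintype.equivFin V w : ℕ) := by omega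
    exact hvw ((Fintype.equivFin V).injective (Fin.val_injective this))
  -- preservation outside S
  have hpres : ∀ v w : V, ¬(c v = k ∧ c w = k) → (c' v = c' w ↔ c v = c w) := by
    intro v w h
    simp only [hc']
    by_cases hv : c v = k <;> by_cases hw : c w = k
    · exact absurd ⟨hv, hw⟩ h
    · rw [if_pos hv, if_neg hw]; omega
    · rw [if_neg hv, if_pos hw]; omega
    · rw [if_neg hv, if_neg hw]; omega
  -- the difference of objectives
  have hdiff : lamCC G lam c' - lamCC G lam c
      = (1 / 2) * ∑ p ∈ S.offDiag, ((if G.Adj p.1 p.2 then (1 : ℝ) else 0) - lam) := by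
    unfold lamCC
    rw [← mul_sub, ← Finset.sum_sub_distrib]
    congr 1
    rw [← Finset.sum_subset (Finset.offDiag_mono (Finset.subset_univ S))]
    · refine Finset.sum_congr rfl ?_
      intro p hp
      rw [Finset.mem_offDiag] at hp
      obtain ⟨h1, h2, h12⟩ := hp
      rw [hS, Finset.mem_filter] at h1 h2
      have hne : c' p.1 ≠ c' p.2 := hsep _ _ h1.2 h2.2 h12
      simp only [h1.2, h2.2, hne, if_true, if_false]
      by_cases hadj : G.Adj p.1 p.2 <;> simp [hadj]
    · intro p hp hns
      rw [Finset.mem_offDiag] at hp hns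
      have hnb : ¬(c p.1 = k ∧ c p.2 = k) := by
        intro ⟨ha, hb⟩
        exact hns ⟨by simp [hS, ha], by simp [hS, hb], hp.2.2⟩
      by_cases hcc : c p.1 = c p.2
      · have h' : c' p.1 = c' p.2 := (hpres _ _ hnb).mpr hcc
        simp [hcc, h']
      · have h' : c' p.1 ≠ c' p.2 := fun h => hcc ((hpres _ _ hnb).mp h)
        simp [hcc, h']
  -- evaluate the sum
  set A : ℕ := (S.offDiag.filter fun p => G.Adj p.1 p.2).card with hA
  have hsum : ∑ p ∈ S.offDiag, ((if G.Adj p.1 p.2 then (1 : ℝ) else 0) - lam)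
      = (A : ℝ) - lam * (S.offDiag.card : ℝ) := by
    rw [Finset.sum_sub_distrib, Finset.sum_const, Finset.sum_boole, hA]
    simp [nsmul_eq_mul, mul_comm]
  have h0 : (0 : ℝ) ≤ lamCC G lam c' - lamCC G lam c := by
    have := hopt c'
    linarith
  rw [hdiff, hsum] at h0
  have hkey : lam * (S.offDiag.card : ℝ) ≤ (A : ℝ) := by linarith
  -- card computations
  have hle : S.card ≤ S.card * S.card := Nat.le_mul_of_pos_left _ (by
    rcases Finset.mem_image.mp hk with ⟨v, _, hv⟩
    exact Finset.card_pos.mpr ⟨v, by simp [hS, hv]⟩)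
  have hcard : (S.offDiag.card : ℝ) = (S.card : ℝ) * (S.card : ℝ) - (S.card : ℝ) := by
    rw [Finset.offDiag_card, Nat.cast_sub hle, Nat.cast_mul]
  have hch : ((S.card.choose 2 : ℕ) : ℝ) = (S.card : ℝ) * ((S.card : ℝ) - 1) / 2 :=
    Nat.cast_choose_two ℝ S.card
  rw [hcard] at hkey
  rw [hch]
  nlinarith [hkey]
end

section
/- Let G = (V,E) be a graph with m edges. For every λ ∈ (m/(m+1), 1), any partition minimizing the standard LambdaCC objective consists entirely of cliques of G, and moreover a partition into cliques minimizes LambdaCC if and only if it minimizes the cluster deletion objective (the number of edges between distinct clusters). -/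
open Finset

/-- The cluster deletion score of a clustering `c`: the number of edges of `G` between
distinct clusters (each unordered pair counted once via `1/2 · offDiag`). -/
noncomputable def cdScore {V : Type*} [Fintype V] [DecidableEq V]
    (G : SimpleGraph V) [DecidableRel G.Adj] (c : V → ℕ) : ℝ :=
  (1 / 2) * ((Finset.univ.offDiag.filter
      fun p : V × V => G.Adj p.1 p.2 ∧ c p.1 ≠ c p.2).card : ℝ)

section Aux
variable {V : Type*} [Fintype V] [DecidableEq V]
    (G : SimpleGraph V) [DecidableRel G.Adj]

/-- pairs in the same cluster that are not adjacent -/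
def missCard (c : V → ℕ) : ℕ :=
  (Finset.univ.offDiag.filter fun p : V × V => ¬ G.Adj p.1 p.2 ∧ c p.1 = c p.2).card

lemma lamCC_decomp (lam : ℝ) (c : V → ℕ) :
    lamCC G lam c = (1 - lam) * cdScore G c + lam * (1 / 2) * (missCard G c : ℝ) := by
  unfold lamCC cdScore missCard
  have h : ∀ p ∈ Finset.univ.offDiag,
      (if G.Adj p.1 p.2 then (if c p.1 = c p.2 then (0:ℝ) else 1 - lam)
        else (if c p.1 = c p.2 then lam else 0))
      = (if G.Adj p.1 p.2 ∧ c p.1 ≠ c p.2 then (1 - lam) else 0)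
        + (if ¬ G.Adj p.1 p.2 ∧ c p.1 = c p.2 then lam else 0) := by
    intro p _
    by_cases h1 : G.Adj p.1 p.2 <;> by_cases h2 : c p.1 = c p.2 <;> simp [h1, h2]
  rw [Finset.sum_congr rfl h, Finset.sum_add_distrib, ← Finset.sum_filter,
    ← Finset.sum_filter, Finset.sum_const, Finset.sum_const, nsmul_eq_mul, nsmul_eq_mul]
  ring

lemma cdScore_nonneg (c : V → ℕ) : 0 ≤ cdScore G c := by
  unfold cdScore; positivity

lemma cut_le (c : V → ℕ) :
    cdScore G c ≤ (G.edgeFinset.card : ℝ) := by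
  unfold cdScore
  have h1 : (Finset.univ.offDiag.filter
      fun p : V × V => G.Adj p.1 p.2 ∧ c p.1 ≠ c p.2)
      ⊆ (Finset.univ.filter fun p : V × V => G.Adj p.1 p.2) := by
    intro p hp
    simp only [Finset.mem_filter, Finset.mem_offDiag] at hp ⊢
    exact ⟨Finset.mem_univ _, hp.2.1⟩
  have h2 := Finset.card_le_card h1
  have h3 : (Finset.univ.filter fun p : V × V => G.Adj p.1 p.2).card
      = 2 * G.edgeFinset.card := by
    rw [SimpleGraph.two_mul_card_edgeFinset]
  rw [h3] at h2
  have := (Nat.cast_le (α := ℝ)).2 h2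
  push_cast at this
  linarith

/-- clique clusterings have no missing pairs -/
lemma missCard_eq_zero (c : V → ℕ)
    (hc : ∀ k ∈ Finset.univ.image c,
      G.IsClique ((Finset.univ.filter fun v => c v = k) : Finset V)) :
    missCard G c = 0 := by
  unfold missCard
  rw [Finset.card_eq_zero, Finset.filter_eq_empty_iff]
  rintro ⟨u, v⟩ hp
  simp only [Finset.mem_offDiag, Finset.mem_univ, true_and] at hp
  rintro ⟨hna, heq⟩
  apply hna
  have hk : c u ∈ Finset.univ.image c := Finset.mem_image_of_mem c (Finset.mem_univ u)
  have := hc (c u) hk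
  exact this (by simp) (by simp [heq.symm]) hp

/-- the singleton clustering -/
noncomputable def singClus : V → ℕ := fun v => (Fintype.equivFin V v : ℕ)

lemma singClus_clique :
    ∀ k ∈ Finset.univ.image (singClus (V := V)),
      G.IsClique ((Finset.univ.filter fun v => singClus v = k) : Finset V) := by
  intro k _
  intro u hu v hv huv
  exfalso
  simp only [Finset.coe_filter, Set.mem_setOf_eq] at hu hv
  apply huv
  have : (Fintype.equivFin V u : ℕ) = (Fintype.equivFin V v : ℕ) := by
    simp only [singClus] at hu hv
    rw [hu.2, hv.2]
  exact (Fintype.equivFin V).injective (Fin.ext this)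

lemma missCard_singClus : missCard G (singClus (V := V)) = 0 :=
  missCard_eq_zero G _ (singClus_clique G)

lemma cdScore_singClus : cdScore G (singClus (V := V)) = (G.edgeFinset.card : ℝ) := by
  unfold cdScore
  have h1 : (Finset.univ.offDiag.filter
      fun p : V × V => G.Adj p.1 p.2 ∧ singClus p.1 ≠ singClus p.2)
      = (Finset.univ.filter fun p : V × V => G.Adj p.1 p.2) := by
    ext p
    simp only [Finset.mem_filter, Finset.mem_offDiag, Finset.mem_univ, true_and]
    constructor
    · rintro ⟨_, h, _⟩; exact h
    · intro h
      refine ⟨h.ne, h, ?_⟩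
      intro hcon
      exact h.ne ((Fintype.equivFin V).injective (Fin.ext hcon))
  rw [h1, ← SimpleGraph.two_mul_card_edgeFinset]
  push_cast
  ring

/-- if some cluster is not a clique, missCard ≥ 2 -/
lemma two_le_missCard (c : V → ℕ) (u v : V) (huv : u ≠ v) (hcl : c u = c v)
    (hna : ¬ G.Adj u v) : 2 ≤ missCard G c := by
  unfold missCard
  have hsub : ({(u, v), (v, u)} : Finset (V × V)) ⊆
      (Finset.univ.offDiag.filter fun p : V × V => ¬ G.Adj p.1 p.2 ∧ c p.1 = c p.2) := by
    intro p hp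
    simp only [Finset.mem_insert, Finset.mem_singleton] at hp
    rcases hp with rfl | rfl <;>
      simp only [Finset.mem_filter, Finset.mem_offDiag, Finset.mem_univ, true_and]
    · exact ⟨huv, hna, hcl⟩
    · exact ⟨huv.symm, fun h => hna h.symm, hcl.symm⟩
  have hcard : ({(u, v), (v, u)} : Finset (V × V)).card = 2 := by
    rw [Finset.card_insert_of_notMem (by simp [huv]), Finset.card_singleton]
  calc 2 = ({(u, v), (v, u)} : Finset (V × V)).card := hcard.symm
    _ ≤ _ := Finset.card_le_card hsub

end Aux

/-- For `λ ∈ (m/(m+1), 1)`: every clustering minimizing the standard LambdaCC objective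
consists entirely of cliques, and a clustering into cliques minimizes LambdaCC iff it
minimizes the cluster deletion objective among clusterings into cliques. -/
theorem lamCC_eq_clusterDeletion_for_large_lam {V : Type*} [Fintype V] [DecidableEq V]
    (G : SimpleGraph V) [DecidableRel G.Adj] (lam : ℝ)
    (hlam0 : (G.edgeFinset.card : ℝ) / (G.edgeFinset.card + 1) < lam) (hlam1 : lam < 1) :
    (∀ c : V → ℕ, (∀ c' : V → ℕ, lamCC G lam c ≤ lamCC G lam c') →
      ∀ k ∈ Finset.univ.image c,
        G.IsClique ((Finset.univ.filter fun v => c v = k) : Finset V)) ∧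
    (∀ c : V → ℕ,
      (∀ k ∈ Finset.univ.image c,
        G.IsClique ((Finset.univ.filter fun v => c v = k) : Finset V)) →
      ((∀ c' : V → ℕ, lamCC G lam c ≤ lamCC G lam c') ↔
        (∀ c' : V → ℕ,
          (∀ k ∈ Finset.univ.image c',
            G.IsClique ((Finset.univ.filter fun v => c' v = k) : Finset V)) →
          cdScore G c ≤ cdScore G c'))) := by
  set m : ℝ := (G.edgeFinset.card : ℝ) with hm
  have hm0 : (0:ℝ) ≤ m := by positivity
  have hmlam : (1 - lam) * m < lam := by
    have h1 : (0:ℝ) < m + 1 := by linarith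
    rw [div_lt_iff₀ h1] at hlam0
    nlinarith
  have hlampos : 0 < lam := by nlinarith
  have h1lam : 0 < 1 - lam := by linarith
  -- lamCC of singleton clustering
  have hsing : lamCC G lam (singClus (V := V)) = (1 - lam) * m := by
    rw [lamCC_decomp, missCard_singClus, cdScore_singClus]
    push_cast
    ring
  -- key: any minimizer is a clique clustering
  have key : ∀ c : V → ℕ, (∀ c' : V → ℕ, lamCC G lam c ≤ lamCC G lam c') →
      ∀ k ∈ Finset.univ.image c,
        G.IsClique ((Finset.univ.filter fun v => c v = k) : Finset V) := by
    intro c hmin k _ u hu v hv huv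
    by_contra hna
    simp only [Finset.coe_filter, Set.mem_setOf_eq] at hu hv
    have hcl : c u = c v := by rw [hu.2, hv.2]
    have h2 := two_le_missCard G c u v huv hcl hna
    have h2' : (2:ℝ) ≤ (missCard G c : ℝ) := by exact_mod_cast h2
    have hlb : lam ≤ lamCC G lam c := by
      rw [lamCC_decomp]
      have := cdScore_nonneg G c
      nlinarith
    have := hmin (singClus (V := V))
    rw [hsing] at this
    linarith
  refine ⟨key, ?_⟩
  intro c hc
  have hc0 : missCard G c = 0 := missCard_eq_zero G c hc
  have hceq : lamCC G lam c = (1 - lam) * cdScore G c := by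
    rw [lamCC_decomp, hc0]; simp
  constructor
  · intro hmin c' hc'
    have hc'0 : missCard G c' = 0 := missCard_eq_zero G c' hc'
    have hc'eq : lamCC G lam c' = (1 - lam) * cdScore G c' := by
      rw [lamCC_decomp, hc'0]; simp
    have := hmin c'
    rw [hceq, hc'eq] at this
    exact le_of_mul_le_mul_left (by linarith) h1lam
  · intro hmin c'
    have hub : cdScore G c ≤ m := by
      have := hmin (singClus (V := V)) (singClus_clique G)
      rw [cdScore_singClus] at this
      exact this
    by_cases hcl' : ∀ k ∈ Finset.univ.image c',
        G.IsClique ((Finset.univ.filter fun v => c' v = k) : Finset V)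
    · have hc'0 : missCard G c' = 0 := missCard_eq_zero G c' hcl'
      have hc'eq : lamCC G lam c' = (1 - lam) * cdScore G c' := by
        rw [lamCC_decomp, hc'0]; simp
      rw [hceq, hc'eq]
      exact mul_le_mul_of_nonneg_left (hmin c' hcl') (le_of_lt h1lam)
    · push_neg at hcl'
      obtain ⟨k, hk, hnc⟩ := hcl'
      rw [SimpleGraph.isClique_iff] at hnc
      rw [Set.Pairwise] at hnc
      push_neg at hnc
      obtain ⟨u, hu, v, hv, huv, hna⟩ := hnc
      simp only [Finset.coe_filter, Set.mem_setOf_eq] at hu hv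
      have hcl : c' u = c' v := by rw [hu.2, hv.2]
      have h2 := two_le_missCard G c' u v huv hcl hna
      have h2' : (2:ℝ) ≤ (missCard G c' : ℝ) := by exact_mod_cast h2
      have hlb : lam ≤ lamCC G lam c' := by
        rw [lamCC_decomp]
        have := cdScore_nonneg G c'
        nlinarith
      have : lamCC G lam c ≤ (1 - lam) * m := by
        rw [hceq]
        exact mul_le_mul_of_nonneg_left hub (le_of_lt h1lam)
      linarith
end

section
/- Let x be a semimetric on a finite node set with values in [0,1] and λ ∈ (1/2, 1). For any triple i,j,k with x_{ij} < 1/3, x_{jk} < 1/3, and x_{ik} ≥ 1/3, where (i,j) and (j,k) are positive edges (weight 1-λ) and (i,k) is a negative edge (weight λ), the following holds: (1-λ) + (1-λ) + λ ≤ 3[(1-λ)x_{ij} + (1-λ)x_{jk} + λ(1-x_{ik})]. -/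
/-- Case 1 of the bad-triangle analysis for the 3-approximation of LambdaCC
(`λ > 1/2`): for a triple with `x i j < 1/3`, `x j k < 1/3`, `x i k ≥ 1/3`, where
`(i,j)` and `(j,k)` are positive edges of weight `1-λ` and `(i,k)` is a negative edge
of weight `λ`, the mistake weight is at most `3` times the LP cost. -/
theorem bad_triangle_case_one {V : Type*} (lam : ℝ) (hlam : 1 / 2 < lam) (hlam1 : lam < 1)
    (x : V → V → ℝ)
    (hnonneg : ∀ a b, 0 ≤ x a b) (hle : ∀ a b, x a b ≤ 1)
    (hsym : ∀ a b, x a b = x b a)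
    (htri : ∀ a b c, x a b ≤ x a c + x c b)
    (i j k : V) (hij : x i j < 1 / 3) (hjk : x j k < 1 / 3) (hik : 1 / 3 ≤ x i k) :
    (1 - lam) + (1 - lam) + lam
      ≤ 3 * ((1 - lam) * x i j + (1 - lam) * x j k + lam * (1 - x i k)) := by
  have h := htri i k j
  nlinarith [hnonneg i j, hnonneg j k, mul_le_mul_of_nonneg_left h (le_of_lt (lt_trans (by norm_num) hlam))]
end

section
/- Let x be a semimetric with values in [0,1] on a finite node set, λ ∈ (1/2,1), and i,j,k a triple with x_{ij} < 1/3, x_{jk} < 1/3, x_{ik} ≥ 1/3, where (i,j) is a positive edge (weight 1-λ) and (j,k),(i,k) are negative edges (weight λ). Then (1-λ) + λ ≤ 3[(1-λ)x_{ij} + λ(1-x_{jk}) + λ(1-x_{ik})]. -/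
/-- Case 2 of the bad-triangle analysis for the 3-approximation of LambdaCC
(`λ > 1/2`): for a triple with `x i j < 1/3`, `x j k < 1/3`, `x i k ≥ 1/3`, where
`(i,j)` is a positive edge of weight `1-λ` and `(j,k)`, `(i,k)` are negative edges of
weight `λ`, the mistake weight is at most `3` times the LP cost. -/
theorem bad_triangle_case_two {V : Type*} (lam : ℝ) (hlam : 1 / 2 < lam) (hlam1 : lam < 1)
    (x : V → V → ℝ)
    (hnonneg : ∀ a b, 0 ≤ x a b) (hle : ∀ a b, x a b ≤ 1)
    (hsym : ∀ a b, x a b = x b a)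
    (htri : ∀ a b c, x a b ≤ x a c + x c b)
    (i j k : V) (hij : x i j < 1 / 3) (hjk : x j k < 1 / 3) (hik : 1 / 3 ≤ x i k) :
    (1 - lam) + lam
      ≤ 3 * ((1 - lam) * x i j + lam * (1 - x j k) + lam * (1 - x i k)) := by
  have h := htri i k j
  nlinarith [hnonneg i j, hnonneg j k, mul_nonneg (sub_nonneg.2 hlam1.le) (hnonneg i j)]
end

section
/- Let u be a node, T a finite set with values x_{ui} ≤ 2/5 for i ∈ T, and suppose ∑_{i∈T} x_{ui} ≥ |T|/5 (the singleton condition). Let T+ ⊆ T be positive pairs with cost x_{ui} each and T- = T∖T+ negative pairs with cost α(1-x_{ui}) each, α > 1. Then the LP cost ∑_{i∈T+} x_{ui} + α∑_{i∈T-}(1-x_{ui}) ≥ |T|/5, so making u a singleton incurs at most |T| mistakes, within factor 5 of the LP cost. -/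
open Finset

/-- Singleton-cluster charging in the factor-5 LP rounding for LambdaCC: if all
distances `d i = x u i`, `i ∈ T`, are at most `2/5` and `∑_{i∈T} d i ≥ |T|/5`, then for
any split of `T` into positive pairs `Tp` (LP cost `d i`) and negative pairs `T ∖ Tp`
(LP cost `α(1 - d i)`, `α > 1`), the LP cost is at least `|T|/5`; hence the at most
`|T|` mistakes of the singleton cluster are within factor `5` of the LP cost. -/
theorem singleton_cluster_charging {ι : Type*} [DecidableEq ι]
    (T Tp : Finset ι) (hTp : Tp ⊆ T) (d : ι → ℝ) (alpha : ℝ) (halpha : 1 < alpha)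
    (hd0 : ∀ i ∈ T, 0 ≤ d i) (hd : ∀ i ∈ T, d i ≤ 2 / 5)
    (hsum : (T.card : ℝ) / 5 ≤ ∑ i ∈ T, d i) :
    (T.card : ℝ) / 5 ≤ ∑ i ∈ Tp, d i + alpha * ∑ i ∈ T \ Tp, (1 - d i) ∧
      (T.card : ℝ) ≤ 5 * (∑ i ∈ Tp, d i + alpha * ∑ i ∈ T \ Tp, (1 - d i)) := by
  have key : (T.card : ℝ) / 5 ≤ ∑ i ∈ Tp, d i + alpha * ∑ i ∈ T \ Tp, (1 - d i) := by
    have h1 : ∑ i ∈ T \ Tp, d i ≤ alpha * ∑ i ∈ T \ Tp, (1 - d i) := by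
      rw [Finset.mul_sum]
      apply Finset.sum_le_sum
      intro i hi
      have hiT : i ∈ T := (Finset.mem_sdiff.mp hi).1
      have h2 : d i ≤ 2 / 5 := hd i hiT
      nlinarith [hd0 i hiT]
    calc (T.card : ℝ) / 5 ≤ ∑ i ∈ T, d i := hsum
      _ = ∑ i ∈ Tp, d i + ∑ i ∈ T \ Tp, d i := by rw [← Finset.sum_sdiff hTp]; ring
      _ ≤ _ := by linarith
  exact ⟨key, by linarith⟩
end

section
/- Let u be a node, T = {i : x_{ui} ≤ 2/5} with average distance ∑_{i∈T} x_{ui} < |T|/5, and let j ∉ T with x_{uj} ∈ (2/5, 3/5). Partition T into T+_j (positive pairs with j, LP cost x_{ij} each) and T-_j (negative pairs, LP cost α(1-x_{ij}) each with α > 1), with p = |T+_j|, q = |T-_j|. If x satisfies the triangle inequalities, then ∑_{i∈T+_j} x_{ij} + α∑_{i∈T-_j}(1-x_{ij}) > p(x_{uj} - 1/5) + q(4/5 - x_{uj}) ≥ p/5, so the p positive mistakes charged to j are within factor 5 of j's LP cost. -/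
open Finset

/-- Non-singleton positive-mistake charging in the factor-5 LP rounding for LambdaCC:
for a cluster seed `u` with `x u i ≤ 2/5` on `T` and `∑_{i∈T} x u i < |T|/5`, and a
node `j ∉ T` with `2/5 < x u j < 3/5`, splitting `T` into positive pairs `Tp` with `j`
(LP cost `x i j`) and negative pairs `T ∖ Tp` (LP cost `α(1 - x i j)`, `α > 1`), the LP
cost at `j` is strictly greater than `p(x u j - 1/5) + q(4/5 - x u j)` which is at
least `p/5`, where `p = |Tp|` and `q = |T ∖ Tp|`. -/
theorem nonsingleton_charging {V : Type*} [DecidableEq V]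
    (x : V → V → ℝ)
    (hnonneg : ∀ a b, 0 ≤ x a b) (hle : ∀ a b, x a b ≤ 1)
    (hsym : ∀ a b, x a b = x b a)
    (htri : ∀ a b c, x a b ≤ x a c + x c b)
    (u j : V) (T Tp : Finset V) (hTp : Tp ⊆ T)
    (hT : ∀ i ∈ T, x u i ≤ 2 / 5)
    (havg : ∑ i ∈ T, x u i < (T.card : ℝ) / 5)
    (hj1 : 2 / 5 < x u j) (hj2 : x u j < 3 / 5)
    (alpha : ℝ) (halpha : 1 < alpha) :
    (Tp.card : ℝ) * (x u j - 1 / 5) + ((T \ Tp).card : ℝ) * (4 / 5 - x u j)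
        < ∑ i ∈ Tp, x i j + alpha * ∑ i ∈ T \ Tp, (1 - x i j) ∧
      (Tp.card : ℝ) / 5
        ≤ (Tp.card : ℝ) * (x u j - 1 / 5) + ((T \ Tp).card : ℝ) * (4 / 5 - x u j) := by
  have hcard : ((T \ Tp).card : ℝ) + (Tp.card : ℝ) = (T.card : ℝ) := by
    exact_mod_cast congrArg Nat.cast (Finset.card_sdiff_add_card_eq_card hTp)
  have hsum : ∑ i ∈ T \ Tp, x u i + ∑ i ∈ Tp, x u i = ∑ i ∈ T, x u i :=
    Finset.sum_sdiff hTp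
  have h1 : ∑ i ∈ Tp, (x u j - x u i) ≤ ∑ i ∈ Tp, x i j := by
    refine Finset.sum_le_sum fun i _ => ?_
    have := htri u j i
    have := hsym i j
    linarith
  have h2 : ∑ i ∈ T \ Tp, (1 - x u j - x u i) ≤ alpha * ∑ i ∈ T \ Tp, (1 - x i j) := by
    have hb : ∑ i ∈ T \ Tp, (1 - x u j - x u i) ≤ ∑ i ∈ T \ Tp, (1 - x i j) := by
      refine Finset.sum_le_sum fun i _ => ?_
      have := htri i j u
      have := hsym i u
      linarith
    have hnn : 0 ≤ ∑ i ∈ T \ Tp, (1 - x i j) :=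
      Finset.sum_nonneg fun i _ => by linarith [hle i j]
    nlinarith
  rw [Finset.sum_sub_distrib, Finset.sum_const, nsmul_eq_mul] at h1
  have h2' : ∑ i ∈ T \ Tp, (1 - x u j - x u i)
      = ((T \ Tp).card : ℝ) * (1 - x u j) - ∑ i ∈ T \ Tp, x u i := by
    rw [show (fun i => 1 - x u j - x u i) = fun i => (1 - x u j) - x u i from rfl,
      Finset.sum_sub_distrib, Finset.sum_const, nsmul_eq_mul]
  rw [h2'] at h2
  constructor
  · nlinarith
  · have hp : (0:ℝ) ≤ Tp.card := Nat.cast_nonneg _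
    have hq : (0:ℝ) ≤ (T \ Tp).card := Nat.cast_nonneg _
    nlinarith
end
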